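/- (Cerveau–Déserti) Let f ∈ Bir(ℙ²) be an element of the de Jonquières group acting trivially on the basis of the fibration, i.e. a ℂ-algebra automorphism of ℂ(x,y) with f(y) = y. Then either every ψ ∈ Bir(ℙ²) commuting with f maps the subfield ℂ(y) onto itself (i.e. the centralizer of f in Bir(ℙ²) is contained in the de Jonquières group dJ), or f has finite order. -/

import Mathlib

noncomputable section

open MvPolynomial

/-- The field ℂ(x,y) of rational functions in two variables, realized as the fraction
field of the polynomial ring ℂ[x,y]. -/
abbrev K2 : Type := FractionRing (MvPolynomial (Fin 2) ℂ)

/-- The Cremona group Bir(ℙ²), identified with the group (under composition) of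
ℂ-algebra automorphisms of the field ℂ(x,y). -/
abbrev Cremona : Type := K2 ≃ₐ[ℂ] K2

/-- The rational function x. -/
def xx : K2 := algebraMap (MvPolynomial (Fin 2) ℂ) K2 (X 0)

/-- The rational function y. -/
def yy : K2 := algebraMap (MvPolynomial (Fin 2) ℂ) K2 (X 1)

/-- Constants, viewed inside ℂ(x,y). -/
def cC (c : ℂ) : K2 := algebraMap ℂ K2 c

/-- The subfield ℂ(y) of ℂ(x,y). -/
def Cy : IntermediateField ℂ K2 := IntermediateField.adjoin ℂ {yy}

/-! The fixed field of `f` contains ℂ(y), and every `ψ` commuting with `f` maps it onto itself,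
so if it equals ℂ(y) the first alternative holds. Otherwise it contains some `z ∉ ℂ(y)`. Since
ℂ(x,y) = ℂ(y)(x), `z` is a nonconstant rational function of `x` over ℂ(y), so `x` is algebraic
over ℂ(y)(z): ℂ(x,y) is then a finite extension of a field fixed pointwise by `f`, and such an
extension has only finitely many automorphisms. -/

open IntermediateField

namespace IntermediateField

variable {F E : Type*} [Field F] [Field E] [Algebra F E]

theorem isAlgebraic_adjoin_simple_of_mem_adjoin_simple {t z : E} (hzt : z ∈ F⟮t⟯)
    (hz : z ∉ (⊥ : IntermediateField F E)) : IsAlgebraic F⟮z⟯ t := by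
  obtain ⟨p, q, hpq⟩ := (mem_adjoin_simple_iff F z).1 hzt
  have hq : Polynomial.aeval t q ≠ 0 := fun h => hz (by simp [hpq, h])
  -- `t` is a root of `p - z * q`, which vanishes only if `z` is a ratio of coefficients.
  refine ⟨p.map (algebraMap F F⟮z⟯) - Polynomial.C (AdjoinSimple.gen F z) *
    q.map (algebraMap F F⟮z⟯), fun h0 => hz ?_, ?_⟩
  · obtain ⟨i, hi⟩ : ∃ i, q.coeff i ≠ 0 := by
      by_contra! hall
      exact hq (by rw [show q = 0 from Polynomial.ext (by simpa using hall), map_zero])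
    have hcoeff := congrArg (fun r => ((r.coeff i : F⟮z⟯) : E)) h0
    simp only [Polynomial.coeff_sub, Polynomial.coeff_map, Polynomial.coeff_C_mul,
      AddSubgroupClass.coe_sub, SubalgebraClass.coe_algebraMap, MulMemClass.coe_mul,
      AdjoinSimple.coe_gen, Polynomial.coeff_zero, ZeroMemClass.coe_zero] at hcoeff
    refine mem_bot.2 ⟨p.coeff i / q.coeff i, ?_⟩
    rw [map_div₀, div_eq_iff ((map_ne_zero _).2 hi), ← sub_eq_zero, hcoeff]
  · simp [Polynomial.aeval_map_algebraMap, hpq, hq]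

theorem finiteDimensional_adjoin_simple_of_adjoin_simple_eq_top {t z : E} (ht : F⟮t⟯ = ⊤)
    (hz : z ∉ (⊥ : IntermediateField F E)) : FiniteDimensional F⟮z⟯ E := by
  have halg : IsAlgebraic F⟮z⟯ t :=
    isAlgebraic_adjoin_simple_of_mem_adjoin_simple (ht ▸ mem_top) hz
  have htop : F⟮z⟯⟮t⟯ = ⊤ := by
    refine restrictScalars_injective F ?_
    rw [restrictScalars_top, adjoin_adjoin_left, eq_top_iff, ← ht]
    exact adjoin.mono _ _ _ Set.subset_union_right
  have := adjoin.finiteDimensional halg.isIntegral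
  exact ((equivOfEq htop).trans topEquiv).toLinearEquiv.finiteDimensional

theorem mem_fixedField_zpowers_iff {σ : E ≃ₐ[F] E} {x : E} :
    x ∈ fixedField (Subgroup.zpowers σ) ↔ σ x = x := by
  rw [mem_fixedField_iff, Subgroup.forall_mem_zpowers]
  exact MulAction.mem_fixedBy_zpowers_iff_mem_fixedBy (g := σ)

theorem image_fixedField_zpowers_of_commute {σ ψ : E ≃ₐ[F] E} (h : Commute ψ σ) :
    ψ '' (fixedField (Subgroup.zpowers σ) : Set E) = fixedField (Subgroup.zpowers σ) := by
  have hfix : (fixedField (Subgroup.zpowers σ) : Set E) = MulAction.fixedBy E σ :=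
    Set.ext fun _ => mem_fixedField_zpowers_iff
  change (fun x => ψ • x) '' _ = _
  rw [hfix, Set.image_smul, MulAction.smul_fixedBy, h.eq, mul_inv_cancel_right]

end IntermediateField

theorem AlgEquiv.isOfFinOrder_of_forall_apply_algebraMap {F L E : Type*} [Field F] [Field L]
    [Field E] [Algebra F E] [Algebra L E] [FiniteDimensional L E] (σ : E ≃ₐ[F] E)
    (hσ : ∀ x : L, σ (algebraMap L E x) = algebraMap L E x) : IsOfFinOrder σ := by
  let τ : E ≃ₐ[L] E := AlgEquiv.ofRingEquiv (f := σ.toRingEquiv) hσ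
  obtain ⟨n, hn, hτ⟩ := isOfFinOrder_iff_pow_eq_one.1 (isOfFinOrder_of_finite τ)
  refine isOfFinOrder_iff_pow_eq_one.2 ⟨n, hn, AlgEquiv.ext fun x => ?_⟩
  have hτσ : ⇑τ = ⇑σ := rfl
  simpa [AlgEquiv.coe_pow, hτσ] using DFunLike.congr_fun hτ x

theorem adjoin_xx_yy_eq_top : ℂ⟮xx, yy⟯ = ⊤ := by
  have hpoly (p : MvPolynomial (Fin 2) ℂ) :
      algebraMap (MvPolynomial (Fin 2) ℂ) K2 p ∈ ℂ⟮xx, yy⟯ := by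
    induction p using MvPolynomial.induction_on with
    | C c => exact IntermediateField.algebraMap_mem _ c
    | add p q hp hq => rw [map_add]; exact add_mem hp hq
    | mul_X p i hp =>
      rw [map_mul]
      refine mul_mem hp (subset_adjoin ℂ _ ?_)
      fin_cases i <;> simp [xx, yy]
  refine eq_top_iff.2 fun a _ => ?_
  obtain ⟨p, q, -, rfl⟩ := IsFractionRing.div_surjective (A := MvPolynomial (Fin 2) ℂ) a
  exact div_mem (hpoly p) (hpoly q)

theorem adjoin_Cy_xx_eq_top : (↥Cy)⟮xx⟯ = ⊤ := by
  refine restrictScalars_injective ℂ ?_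
  rw [restrictScalars_top, Cy, adjoin_adjoin_left, Set.union_comm]
  exact adjoin_xx_yy_eq_top

/-- (Cerveau–Déserti.) Let `f ∈ Bir(ℙ²)` preserve the rational fibration `y = cst` with
trivial action on the basis, i.e. `f(y) = y`.  Then either every `ψ ∈ Bir(ℙ²)` commuting
with `f` maps the subfield ℂ(y) onto itself (i.e. the centralizer of `f` is contained in
the de Jonquières group), or `f` has finite order. -/
theorem centralizer_in_deJonquieres_or_periodic (f : Cremona) (hf : f yy = yy) :
    (∀ ψ : Cremona, Commute ψ f → (fun z => ψ z) '' (Cy : Set K2) = (Cy : Set K2)) ∨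
    IsOfFinOrder f := by
  set fix := fixedField (Subgroup.zpowers f)
  have hCy : Cy ≤ fix := adjoin_simple_le_iff.2 (mem_fixedField_zpowers_iff.2 hf)
  by_cases hfix : fix ≤ Cy
  · left
    intro ψ hψ
    rw [← le_antisymm hfix hCy]
    exact image_fixedField_zpowers_of_commute hψ
  · right
    obtain ⟨z, hz_fix, hz_Cy⟩ := SetLike.not_le_iff_exists.1 hfix
    have hz : z ∉ (⊥ : IntermediateField Cy K2) := fun h => by
      obtain ⟨c, rfl⟩ := mem_bot.1 h
      exact hz_Cy c.2
    have := finiteDimensional_adjoin_simple_of_adjoin_simple_eq_top adjoin_Cy_xx_eq_top hz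
    have hfixes : (↥Cy)⟮z⟯ ≤ extendScalars hCy :=
      adjoin_simple_le_iff.2 ((mem_extendScalars hCy).2 hz_fix)
    exact f.isOfFinOrder_of_forall_apply_algebraMap fun (w : (↥Cy)⟮z⟯) =>
      mem_fixedField_zpowers_iff.1 (hfixes w.2)
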